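/- Let μ be a probability measure on a compact set B and let f, g : B → [α, β] be measurable densities with 0 < α < β < ∞. Then d_KL(f‖g) ≥ c(α,β) · ∫_B (f - g)² dμ, where c(α,β) = h(β/α)/β and h(γ) = (γ - 1 - log γ)/(γ - 1)² for γ ≠ 1, h(1) = 1/2. -/

import Mathlib

/-! Writing `φ t = t - 1 - log t`, the integrand of `∫ f log (f / g) - f + g` is `f · φ (g / f)`,
and the last two terms integrate to `0`. The ratio `φ s / (s - 1) ^ 2` decreases in `s`, so with
`γ = β / α ≥ g / f` one gets `φ (g / f) ≥ h γ · (g / f - 1) ^ 2`; multiplying by `f ≤ β` gives the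
pointwise bound `h γ / β · (f - g) ^ 2 ≤ f log (f / g) - f + g`. The comparison of `φ` with
`C (s - 1) ^ 2`, `C = h γ`, is read off the sign of `(t - 1) (1 - 2 C t) / t`, the derivative of
their difference. -/

open MeasureTheory Set Real

noncomputable def logQuadGap (C t : ℝ) : ℝ := t - 1 - log t - C * (t - 1) ^ 2

@[simp]
lemma logQuadGap_one (C : ℝ) : logQuadGap C 1 = 0 := by
  simp [logQuadGap]

lemma hasDerivAt_logQuadGap (C : ℝ) {t : ℝ} (ht : 0 < t) :
    HasDerivAt (logQuadGap C) ((t - 1) * (1 - 2 * C * t) / t) t := by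
  have hd : HasDerivAt (logQuadGap C) (1 - t⁻¹ - C * (2 * (t - 1) ^ 1 * 1)) t :=
    (((hasDerivAt_id t).sub_const 1).sub (hasDerivAt_log ht.ne')).sub
      ((((hasDerivAt_id t).sub_const 1).pow 2).const_mul C)
  convert hd using 1
  field_simp

lemma monotoneOn_logQuadGap {C : ℝ} {D : Set ℝ} (hD : Convex ℝ D) (hD₀ : D ⊆ Ioi 0)
    (hsign : ∀ t ∈ interior D, 0 ≤ (t - 1) * (1 - 2 * C * t)) :
    MonotoneOn (logQuadGap C) D :=
  monotoneOn_of_hasDerivWithinAt_nonneg hD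
    (fun _ ht ↦ (hasDerivAt_logQuadGap C (hD₀ ht)).continuousAt.continuousWithinAt)
    (fun _ ht ↦ (hasDerivAt_logQuadGap C (hD₀ (interior_subset ht))).hasDerivWithinAt)
    (fun t ht ↦ div_nonneg (hsign t ht) (hD₀ (interior_subset ht)).le)

lemma antitoneOn_logQuadGap {C : ℝ} {D : Set ℝ} (hD : Convex ℝ D) (hD₀ : D ⊆ Ioi 0)
    (hsign : ∀ t ∈ interior D, (t - 1) * (1 - 2 * C * t) ≤ 0) :
    AntitoneOn (logQuadGap C) D :=
  antitoneOn_of_hasDerivWithinAt_nonpos hD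
    (fun _ ht ↦ (hasDerivAt_logQuadGap C (hD₀ ht)).continuousAt.continuousWithinAt)
    (fun _ ht ↦ (hasDerivAt_logQuadGap C (hD₀ (interior_subset ht))).hasDerivWithinAt)
    (fun t ht ↦ div_nonpos_of_nonpos_of_nonneg (hsign t ht) (hD₀ (interior_subset ht)).le)

lemma logQuadGap_half_nonpos {γ : ℝ} (hγ : 1 ≤ γ) : logQuadGap (1 / 2) γ ≤ 0 := by
  have hanti : AntitoneOn (logQuadGap (1 / 2)) (Ici 1) :=
    antitoneOn_logQuadGap (convex_Ici 1) (fun _ ht ↦ mem_Ioi.2 (one_pos.trans_le ht))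
      (fun t _ ↦ by nlinarith [sq_nonneg (t - 1)])
  simpa using hanti self_mem_Ici hγ hγ

/-- `logQuadGap C` increases on `[1, 1/(2C)]` and decreases on either side of it, so it is
nonnegative between its zeros at `1` and `γ`, and to the left of `1`. -/
lemma logQuadGap_nonneg {C γ s : ℝ} (hC : 0 < C) (hC₂ : C ≤ 1 / 2) (hγ : logQuadGap C γ = 0)
    (hs : 0 < s) (hsγ : s ≤ γ) : 0 ≤ logQuadGap C s := by
  set m := 1 / (2 * C)
  have hm : ∀ t, t ≤ m ↔ 2 * C * t ≤ 1 := fun t ↦ by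
    rw [le_div_iff₀ (by positivity), mul_comm]
  have hm₁ : 1 ≤ m := (hm 1).2 (by linarith)
  rcases le_total s 1 with hs₁ | hs₁
  · have hanti : AntitoneOn (logQuadGap C) (Ioc 0 1) :=
      antitoneOn_logQuadGap (convex_Ioc 0 1) Ioc_subset_Ioi_self fun t ht ↦ by
        rw [interior_Ioc] at ht
        have h2Ct : 2 * C * t ≤ 1 := by nlinarith [ht.1, ht.2]
        exact mul_nonpos_of_nonpos_of_nonneg (by linarith [ht.2]) (by linarith)
    simpa using hanti ⟨hs, hs₁⟩ ⟨one_pos, le_rfl⟩ hs₁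
  rcases le_total s m with hsm | hsm
  · have hmono : MonotoneOn (logQuadGap C) (Icc 1 m) :=
      monotoneOn_logQuadGap (convex_Icc 1 m) (fun t ht ↦ one_pos.trans_le ht.1)
        fun t ht ↦ by
          rw [interior_Icc] at ht
          exact mul_nonneg (by linarith [ht.1]) (by linarith [(hm t).1 ht.2.le])
    simpa using hmono ⟨le_rfl, hm₁⟩ ⟨hs₁, hsm⟩ hs₁
  · have hanti : AntitoneOn (logQuadGap C) (Ici m) :=
      antitoneOn_logQuadGap (convex_Ici m) (fun t ht ↦ one_pos.trans_le (hm₁.trans ht))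
        fun t ht ↦ by
          rw [interior_Ici] at ht
          have h2Ct : 1 < 2 * C * t := lt_of_not_ge fun hle ↦ ht.not_ge ((hm t).2 hle)
          exact mul_nonpos_of_nonneg_of_nonpos (by linarith [hm₁.trans ht.le]) (by linarith)
    simpa [hγ] using hanti hsm (hsm.trans hsγ) hsγ

lemma div_sq_mul_sq_le_sub_one_sub_log {γ s : ℝ} (hγ : 1 < γ) (hs : 0 < s) (hsγ : s ≤ γ) :
    (γ - 1 - log γ) / (γ - 1) ^ 2 * (s - 1) ^ 2 ≤ s - 1 - log s := by
  have hsq : 0 < (γ - 1) ^ 2 := by nlinarith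
  set C := (γ - 1 - log γ) / (γ - 1) ^ 2
  have hC : 0 < C := div_pos (by linarith [log_lt_sub_one_of_pos (by linarith) hγ.ne']) hsq
  have hC₂ : C ≤ 1 / 2 := by
    have := logQuadGap_half_nonpos hγ.le
    rw [logQuadGap] at this
    rw [div_le_iff₀ hsq]
    linarith
  have hCγ : logQuadGap C γ = 0 := by
    rw [logQuadGap, div_mul_cancel₀ _ hsq.ne']
    ring
  have := logQuadGap_nonneg hC hC₂ hCγ hs hsγ
  rw [logQuadGap] at this
  linarith

lemma div_mul_sq_sub_le_mul_log_div_sub_add {γ M a b : ℝ} (hγ : 1 < γ) (ha : 0 < a)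
    (haM : a ≤ M) (hb : 0 < b) (hbaγ : b / a ≤ γ) :
    (γ - 1 - log γ) / (γ - 1) ^ 2 / M * (a - b) ^ 2 ≤ a * log (a / b) - a + b := by
  set C := (γ - 1 - log γ) / (γ - 1) ^ 2
  have hC : 0 ≤ C :=
    div_nonneg (by linarith [log_le_sub_one_of_pos (by linarith : 0 < γ)]) (sq_nonneg _)
  have hlog : log (a / b) = -log (b / a) := by rw [← log_inv, inv_div]
  calc C / M * (a - b) ^ 2
      ≤ C / a * (a - b) ^ 2 := by gcongr
    _ = a * (C * (b / a - 1) ^ 2) := by field_simp; ring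
    _ ≤ a * (b / a - 1 - log (b / a)) := by
        gcongr
        exact div_sq_mul_sq_le_sub_one_sub_log hγ (div_pos hb ha) hbaγ
    _ = a * log (a / b) - a + b := by rw [hlog]; field_simp; ring

lemma abs_log_div_le_log_div {α β a b : ℝ} (hα : 0 < α) (ha : a ∈ Icc α β) (hb : b ∈ Icc α β) :
    |log (a / b)| ≤ log (β / α) := by
  have hβ : 0 < β := hα.trans_le (ha.1.trans ha.2)
  have hla := log_le_log hα ha.1
  have hlb := log_le_log hα hb.1
  have hua := log_le_log (hα.trans_le ha.1) ha.2
  have hub := log_le_log (hα.trans_le hb.1) hb.2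
  rw [log_div (hα.trans_le ha.1).ne' (hα.trans_le hb.1).ne', log_div hβ.ne' hα.ne', abs_le]
  constructor <;> linarith

lemma integrable_mul_log_div {B : Type*} [MeasurableSpace B] {μ : Measure B} [IsFiniteMeasure μ]
    {α β : ℝ} (hα : 0 < α) {f g : B → ℝ} (hfm : Measurable f) (hgm : Measurable g)
    (hf : ∀ x, f x ∈ Icc α β) (hg : ∀ x, g x ∈ Icc α β) :
    Integrable (fun x ↦ f x * log (f x / g x)) μ := by
  refine .of_bound (by fun_prop) (β * log (β / α)) (ae_of_all _ fun x ↦ ?_)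
  rw [norm_mul, norm_of_nonneg (hα.le.trans (hf x).1), norm_eq_abs]
  exact mul_le_mul (hf x).2 (abs_log_div_le_log_div hα (hf x) (hg x)) (abs_nonneg _)
    ((hα.trans_le (hf x).1).le.trans (hf x).2)

theorem kl_lower_bound_general {B : Type*} [MeasurableSpace B]
    (μ : Measure B) [IsProbabilityMeasure μ]
    (α β : ℝ) (hα : 0 < α) (hαβ : α < β)
    (h : ℝ → ℝ)
    (hdef : ∀ γ : ℝ, γ ≠ 1 → h γ = (γ - 1 - Real.log γ) / (γ - 1) ^ 2)
    (f g : B → ℝ) (hfm : Measurable f) (hgm : Measurable g)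
    (hf : ∀ x, f x ∈ Set.Icc α β) (hg : ∀ x, g x ∈ Set.Icc α β)
    (hfint : ∫ x, f x ∂μ = 1) (hgint : ∫ x, g x ∂μ = 1) :
    (h (β / α) / β) * ∫ x, (f x - g x) ^ 2 ∂μ ≤ ∫ x, f x * Real.log (f x / g x) ∂μ := by
  have hγ : 1 < β / α := (one_lt_div hα).2 hαβ
  have hpoint (x : B) :
      h (β / α) / β * (f x - g x) ^ 2 ≤ f x * log (f x / g x) - f x + g x := by
    rw [hdef _ hγ.ne']
    exact div_mul_sq_sub_le_mul_log_div_sub_add hγ (hα.trans_le (hf x).1) (hf x).2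
      (hα.trans_le (hg x).1) (div_le_div₀ (hα.trans hαβ).le (hg x).2 hα (hf x).1)
  have hfi : Integrable f μ := .of_mem_Icc α β hfm.aemeasurable (ae_of_all _ hf)
  have hgi : Integrable g μ := .of_mem_Icc α β hgm.aemeasurable (ae_of_all _ hg)
  have hsqi : Integrable (fun x ↦ (f x - g x) ^ 2) μ :=
    .of_mem_Icc 0 ((β - α) ^ 2) (by fun_prop) (ae_of_all _ fun x ↦ by
      obtain ⟨hαf, hfβ⟩ := hf x
      obtain ⟨hαg, hgβ⟩ := hg x
      exact ⟨sq_nonneg _, sq_le_sq' (by linarith) (by linarith)⟩)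
  have hkli := integrable_mul_log_div (μ := μ) hα hfm hgm hf hg
  have hkli_sub : Integrable (fun x ↦ f x * log (f x / g x) - f x) μ := hkli.sub hfi
  calc h (β / α) / β * ∫ x, (f x - g x) ^ 2 ∂μ
      = ∫ x, h (β / α) / β * (f x - g x) ^ 2 ∂μ := (integral_const_mul _ _).symm
    _ ≤ ∫ x, (f x * log (f x / g x) - f x + g x) ∂μ :=
        integral_mono (hsqi.const_mul _) (hkli_sub.add hgi) hpoint
    _ = ∫ x, f x * log (f x / g x) ∂μ := by
        rw [integral_add hkli_sub hgi, integral_sub hkli hfi, hfint, hgint]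
        ring

theorem kl_lower_bound {B : Type*} [MeasurableSpace B] [TopologicalSpace B] [CompactSpace B]
    (μ : Measure B) [IsProbabilityMeasure μ]
    (α β : ℝ) (hα : 0 < α) (hαβ : α < β)
    (h : ℝ → ℝ)
    (hdef : ∀ γ : ℝ, γ ≠ 1 → h γ = (γ - 1 - Real.log γ) / (γ - 1) ^ 2)
    (hone : h 1 = 1 / 2)
    (f g : B → ℝ) (hfm : Measurable f) (hgm : Measurable g)
    (hf : ∀ x, f x ∈ Set.Icc α β) (hg : ∀ x, g x ∈ Set.Icc α β)
    (hfint : ∫ x, f x ∂μ = 1) (hgint : ∫ x, g x ∂μ = 1) :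
    (h (β / α) / β) * ∫ x, (f x - g x) ^ 2 ∂μ ≤ ∫ x, f x * Real.log (f x / g x) ∂μ :=
  kl_lower_bound_general μ α β hα hαβ h hdef f g hfm hgm hf hg hfint hgint
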